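/- Suppose the Yamabe invariant of ℂP², Y(ℂP²), is realized by the conformal class of the Fubini–Study metric g₁, i.e., Y(ℂP²,[g₁]) = Y(ℂP²) and g₁ is Kähler–Einstein with Ricci(g₁) = ρ·g₁, ρ > 0. Then any Riemannian metric g on ℂP² with Ricci(g) ≥ ρ·g satisfies Vol(ℂP², g) ≤ Vol(ℂP², g₁). -/
import Mathlib


/-- Abstract data of a Riemannian metric on `ℂP²`: its total volume, the Yamabe
constant of its conformal class, and the predicate `RicciGE ρ` meaning
`Ricci(g) ≥ ρ·g`. -/
structure CP2Metric where
  vol : ℝ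
  vol_pos : 0 < vol
  yamabe : ℝ
  RicciGE : ℝ → Prop

/-- Theorem B: suppose the Yamabe invariant of `ℂP²` is realized by the conformal
class of the Fubini–Study metric `g₁` (LeBrun/Gursky–LeBrun), which is
Kähler–Einstein with `Ricci(g₁) = ρ·g₁`, `ρ > 0`; by Theorem A (with `n = 4`,
`n·ρ·V^{2/4} = 4ρ·√V`) every metric with `Ricci ≥ ρ·g` has
`Y(ℂP²,[g]) ≥ 4ρ·√(Vol g)`, with equality for the Einstein metric `g₁`.
Then every metric `g` with `Ricci(g) ≥ ρ·g` satisfies `Vol(g) ≤ Vol(g₁)`. -/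
theorem cp2_volume_comparison (ρ : ℝ) (hρ : 0 < ρ) (g₁ : CP2Metric)
    (hThmA : ∀ g : CP2Metric, g.RicciGE ρ → 4 * ρ * Real.sqrt g.vol ≤ g.yamabe)
    (hEinstein : g₁.yamabe = 4 * ρ * Real.sqrt g₁.vol)
    (hSup : ∀ g : CP2Metric, g.yamabe ≤ g₁.yamabe)
    (g : CP2Metric) (hric : g.RicciGE ρ) :
    g.vol ≤ g₁.vol := by
  have h1 : 4 * ρ * Real.sqrt g.vol ≤ 4 * ρ * Real.sqrt g₁.vol := by
    calc 4 * ρ * Real.sqrt g.vol ≤ g.yamabe := hThmA g hric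
      _ ≤ g₁.yamabe := hSup g
      _ = 4 * ρ * Real.sqrt g₁.vol := hEinstein
  have h2 : Real.sqrt g.vol ≤ Real.sqrt g₁.vol :=
    le_of_mul_le_mul_left h1 (by linarith)
  have := Real.sqrt_le_sqrt (le_of_lt g₁.vol_pos)
  nlinarith [Real.sq_sqrt (le_of_lt g.vol_pos), Real.sq_sqrt (le_of_lt g₁.vol_pos),
    Real.sqrt_nonneg g.vol, Real.sqrt_nonneg g₁.vol]
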